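/- arXiv:2411.17364 — 3 statements merged into one kernel-verified Lean document; each statement's English description precedes it below -/
import Mathlib

section
/- Let N be a positive integer, Λ = (n_1, …, n_N) a vector of distinct positive integers, a_i ∈ ℂ^{n_i} arbitrary parameter vectors, and set N̂ = 1 + max_i n_i. Define the N × N̂ matrix Φ(x, y, t) with entries Φ_{i,k} = 2^{−(k−1)} S_{n_i+1−k}(x⁺ + (k−1) s + a_i) for 1 ≤ i ≤ N, 1 ≤ k ≤ N̂. Then for all (x, y, t) ∈ ℝ³ the tau function satisfies the Laplace (Cauchy–Binet) expansion σ(x, y, t) = ∑_{1≤ν_1<ν_2<⋯<ν_N≤N̂} |det_{1≤i,j≤N}(Φ_{i,ν_j})|². In particular, σ(x, y, t) is real and nonnegative for every (x, y, t) ∈ ℝ³. -/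
open scoped BigOperators
open Complex

noncomputable section

/-- Elementary Schur polynomial `S_k(x)` for a sequence `x = (x_1, x_2, …)`
(indexed so that `x j` is the `j`-th entry, `j ≥ 1`), defined by the
generating-function identity `∑ S_k(x) ε^k = exp (∑_{n≥1} x_n ε^n)`;
explicitly, `S_k(x) = ∑_{partitions p of k} ∏_i x_i^{m_i(p)} / m_i(p)!`. -/
noncomputable def schurS (k : ℕ) (x : ℕ → ℂ) : ℂ :=
  ∑ p : Nat.Partition k,
    ∏ i ∈ p.parts.toFinset,
      x i ^ (p.parts.count i) / (Nat.factorial (p.parts.count i) : ℂ)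

/-- `S_k` for integer index, with `S_k = 0` for `k < 0`. -/
noncomputable def schurZ (k : ℤ) (x : ℕ → ℂ) : ℂ :=
  if 0 ≤ k then schurS k.toNat x else 0

/-- The sequence `x⁺`, with `x_k⁺ = x/k! + (2^k/k!) i y − 4 (3^k/k!) t`. -/
noncomputable def xplus (x y t : ℝ) (k : ℕ) : ℂ :=
  (x : ℂ) / (Nat.factorial k : ℂ)
    + (2 : ℂ) ^ k / (Nat.factorial k : ℂ) * Complex.I * (y : ℂ)
    - 4 * ((3 : ℂ) ^ k / (Nat.factorial k : ℂ)) * (t : ℂ)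

/-- `s = (s_1, s_2, …)` is the sequence of Taylor coefficients at `α = 0` of
`ln((2/α) tanh(α/2))` (with `s 0 = 0`). -/
def IsSCoeffs (s : ℕ → ℝ) : Prop :=
  s 0 = 0 ∧ ∃ ε > (0 : ℝ), ∀ α : ℝ, α ≠ 0 → |α| < ε →
    HasSum (fun j : ℕ => s j * α ^ j) (Real.log (2 / α * Real.tanh (α / 2)))

/-- The tau function `σ(x,y,t)` of the higher-order lump with index vector
`Λ = (n 0, …, n (N-1))` and internal parameters `a`. -/
noncomputable def tau (N : ℕ) (n : Fin N → ℕ) (a : Fin N → ℕ → ℂ) (s : ℕ → ℝ)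
    (x y t : ℝ) : ℂ :=
  Matrix.det (Matrix.of fun i j : Fin N =>
    ∑ ν ∈ Finset.range (min (n i) (n j) + 1),
      ((4 : ℂ)⁻¹) ^ ν
        * schurS (n i - ν) (fun k => xplus x y t k + (ν : ℂ) * (s k : ℂ) + a i k)
        * schurS (n j - ν) (fun k =>
            (starRingEnd ℂ) (xplus x y t k) + (ν : ℂ) * (s k : ℂ)
              + (starRingEnd ℂ) (a j k)))

/-- The higher-order lump `u_Λ = 2 ∂²/∂x² ln σ`. -/
noncomputable def uLam (N : ℕ) (n : Fin N → ℕ) (a : Fin N → ℕ → ℂ) (s : ℕ → ℝ)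
    (x y t : ℝ) : ℝ :=
  (2 * iteratedDeriv 2 (fun x' : ℝ => Complex.log (tau N n a s x' y t)) x).re

/-- The fundamental lump. -/
noncomputable def u1 (x y t : ℝ) : ℝ :=
  16 * (1 - 4 * (x - 12 * t) ^ 2 + 16 * y ^ 2)
    / (1 + 4 * (x - 12 * t) ^ 2 + 16 * y ^ 2) ^ 2

/-- Partial derivative in the first (x) variable. -/
noncomputable def pdx (f : ℝ → ℝ → ℝ → ℝ) : ℝ → ℝ → ℝ → ℝ :=
  fun x y t => deriv (fun x' => f x' y t) x

/-- Partial derivative in the second (y) variable. -/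
noncomputable def pdy (f : ℝ → ℝ → ℝ → ℝ) : ℝ → ℝ → ℝ → ℝ :=
  fun x y t => deriv (fun y' => f x y' t) y

/-- Partial derivative in the third (t) variable. -/
noncomputable def pdt (f : ℝ → ℝ → ℝ → ℝ) : ℝ → ℝ → ℝ → ℝ :=
  fun x y t => deriv (fun t' => f x y t') t

/-- `u` satisfies the KP-I equation `(u_t + 6 u u_x + u_{xxx})_x − 3 u_{yy} = 0`
at the point `(x, y, t)`. -/
def IsKPISolutionAt (u : ℝ → ℝ → ℝ → ℝ) (x y t : ℝ) : Prop :=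
  pdx (fun x y t => pdt u x y t + 6 * u x y t * pdx u x y t + pdx (pdx (pdx u)) x y t) x y t
    - 3 * pdy (pdy u) x y t = 0

end

/-- The `N × N̂` matrix `Φ` with `Φ_{i,k} = 2^{-(k-1)} S_{n_i+1-k}(x⁺ + (k-1)s + a_i)`
(here rows `i` and columns `k` are 0-indexed, so the 0-indexed column `k`
corresponds to the 1-indexed column `k+1`). -/
noncomputable def PhiMat (N Nhat : ℕ) (n : Fin N → ℕ) (a : Fin N → ℕ → ℂ)
    (s : ℕ → ℝ) (x y t : ℝ) : Matrix (Fin N) (Fin Nhat) ℂ :=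
  Matrix.of fun i k =>
    ((2 : ℂ)⁻¹) ^ (k : ℕ)
      * schurZ ((n i : ℤ) - (k : ℕ)) (fun j => xplus x y t j + ((k : ℕ) : ℂ) * (s j : ℂ) + a i j)


section CauchyBinet

open Equiv Equiv.Perm Finset Function Matrix

variable {R : Type*} [CommRing R]

private theorem myAux {N : ℕ} {M : Type*} (A : Fin N → M → R) (B : M → Fin N → R)
    {p : Fin N → M} (H : ¬Function.Injective p) :
    (∑ σ : Perm (Fin N), ((Equiv.Perm.sign σ : ℤ) : R) * ∏ x, A (σ x) (p x) * B (p x) x) = 0 := by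
  obtain ⟨i, j, hpij, hij⟩ : ∃ i j, p i = p j ∧ i ≠ j := by
    rw [Injective] at H; push_neg at H; exact H
  exact
    sum_involution (fun σ _ => σ * Equiv.swap i j)
      (fun σ _ => by
        have : (∏ x, A (σ x) (p x)) = ∏ x, A ((σ * Equiv.swap i j) x) (p x) :=
          Fintype.prod_equiv (swap i j) _ _ (by simp [apply_swap_eq_self hpij])
        simp [this, sign_swap hij, -sign_swap', prod_mul_distrib])
      (fun σ _ _ => (not_congr mul_swap_eq_iff).mpr hij) (fun _ _ => mem_univ _) fun σ _ =>
      mul_swap_involutive i j σ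

theorem cauchyBinet {N M : ℕ}
    (A : Matrix (Fin N) (Fin M) R) (B : Matrix (Fin M) (Fin N) R) :
    (A * B).det = ∑ S ∈ (univ : Finset (Fin M)).powersetCard N,
      if h : S.card = N then
        (A.submatrix id (fun j => ((S.orderIsoOfFin h j : {v // v ∈ S}) : Fin M))).det *
        (B.submatrix (fun j => ((S.orderIsoOfFin h j : {v // v ∈ S}) : Fin M)) id).det
      else 0 := by
  classical
  have key : ∀ (S : Finset (Fin M)) (h : S.card = N),
      (∑ p ∈ univ.filter (fun p : Fin N → Fin M => Injective p ∧ Finset.image p univ = S),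
          ∑ σ : Perm (Fin N), ((Equiv.Perm.sign σ : ℤ) : R) * ∏ i, A (σ i) (p i) * B (p i) i)
        = (A.submatrix id (fun j => ((S.orderIsoOfFin h j : {v // v ∈ S}) : Fin M))).det *
          (B.submatrix (fun j => ((S.orderIsoOfFin h j : {v // v ∈ S}) : Fin M)) id).det := by
    intro S h
    set g : Fin N → Fin M := fun j => ((S.orderIsoOfFin h j : {v // v ∈ S}) : Fin M) with hg
    have hginj : Injective g := fun a b hab =>
      (S.orderIsoOfFin h).injective (Subtype.coe_injective hab)
    have hmem : ∀ k, g k ∈ S := fun k => (S.orderIsoOfFin h k).2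
    rw [← det_mul]
    have h1 : (A.submatrix id g * B.submatrix g id).det
        = ∑ q : Fin N → Fin N, ∑ σ : Perm (Fin N),
            ((Equiv.Perm.sign σ : ℤ) : R) * ∏ i, A (σ i) (g (q i)) * B (g (q i)) i := by
      rw [det_apply']
      simp only [Matrix.mul_apply, submatrix_apply, id_eq, Finset.prod_univ_sum,
        Finset.mul_sum, Fintype.piFinset_univ]
      rw [Finset.sum_comm]
    rw [h1]
    rw [← sum_subset (filter_subset (fun q : Fin N → Fin N => Injective q) univ)
        (fun q _ hq => myAux A B (fun hinj => (by simpa using hq : ¬ Injective q)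
          (fun a b hab => hinj (show g (q a) = g (q b) from congrArg g hab))))]
    have hset : univ.filter (fun p : Fin N → Fin M => Injective p ∧ Finset.image p univ = S)
        = (univ.filter (fun q : Fin N → Fin N => Injective q)).image (fun q => g ∘ q) := by
      ext p
      simp only [mem_filter, mem_univ, true_and, mem_image]
      constructor
      · rintro ⟨hpinj, hpim⟩
        have hpk : ∀ k, p k ∈ S := fun k => by
          rw [← hpim]; exact mem_image_of_mem _ (mem_univ k)
        refine ⟨fun k => (S.orderIsoOfFin h).symm ⟨p k, hpk k⟩, ?_, ?_⟩
        · intro a b hab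
          apply hpinj
          have := congrArg (fun z => (((S.orderIsoOfFin h) z : {v // v ∈ S}) : Fin M)) hab
          simpa using this
        · funext k
          exact congrArg Subtype.val ((S.orderIsoOfFin h).apply_symm_apply ⟨p k, hpk k⟩)
      · rintro ⟨q, hq, rfl⟩
        refine ⟨hginj.comp hq, ?_⟩
        have hqsurj : Surjective q := Finite.surjective_of_injective hq
        ext v
        simp only [mem_image, mem_univ, true_and, Function.comp_apply]
        constructor
        · rintro ⟨k, rfl⟩; exact hmem _
        · intro hv
          obtain ⟨k, hk⟩ := hqsurj ((S.orderIsoOfFin h).symm ⟨v, hv⟩)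
          refine ⟨k, ?_⟩
          rw [show g (q k) = g ((S.orderIsoOfFin h).symm ⟨v, hv⟩) from congrArg g hk]
          exact congrArg Subtype.val ((S.orderIsoOfFin h).apply_symm_apply ⟨v, hv⟩)
    rw [hset, Finset.sum_image (fun q1 _ q2 _ hq => ?_)]
    · rfl
    · funext k
      exact hginj (congrFun hq k)
  calc (A * B).det
      = ∑ p : Fin N → Fin M, ∑ σ : Perm (Fin N),
          ((Equiv.Perm.sign σ : ℤ) : R) * ∏ i, A (σ i) (p i) * B (p i) i := by
        rw [det_apply']
        simp only [Matrix.mul_apply, Finset.prod_univ_sum, Finset.mul_sum,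
          Fintype.piFinset_univ]
        rw [Finset.sum_comm]
    _ = ∑ p ∈ univ.filter (fun p : Fin N → Fin M => Injective p),
          ∑ σ : Perm (Fin N), ((Equiv.Perm.sign σ : ℤ) : R) * ∏ i, A (σ i) (p i) * B (p i) i :=
        (sum_subset (filter_subset _ _) fun p _ hp => myAux A B (by simpa using hp)).symm
    _ = ∑ S ∈ (univ : Finset (Fin M)).powersetCard N,
          ∑ p ∈ (univ.filter (fun p : Fin N → Fin M => Injective p)).filter
              (fun p => Finset.image p univ = S),
            ∑ σ : Perm (Fin N), ((Equiv.Perm.sign σ : ℤ) : R) * ∏ i, A (σ i) (p i) * B (p i) i := by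
        refine (sum_fiberwise_of_maps_to (fun p hp => ?_) _).symm
        simp only [mem_filter, mem_univ, true_and] at hp
        rw [mem_powersetCard]
        exact ⟨subset_univ _, by rw [Finset.card_image_of_injective _ hp]; simp⟩
    _ = _ := by
        refine Finset.sum_congr rfl fun S hS => ?_
        have h : S.card = N := (mem_powersetCard.mp hS).2
        rw [dif_pos h, ← key S h, Finset.filter_filter]

end CauchyBinet

open Matrix

private lemma conj_schurS (k : ℕ) (x : ℕ → ℂ) :
    (starRingEnd ℂ) (schurS k x) = schurS k fun i => (starRingEnd ℂ) (x i) := by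
  unfold schurS
  rw [map_sum]
  refine Finset.sum_congr rfl fun p _ => ?_
  rw [map_prod]
  refine Finset.prod_congr rfl fun i _ => ?_
  rw [map_div₀, map_pow, map_natCast]

private lemma schurZ_of_le {m k : ℕ} (h : k ≤ m) (x : ℕ → ℂ) :
    schurZ ((m : ℤ) - k) x = schurS (m - k) x := by
  rw [schurZ, if_pos (by omega)]
  have : ((m : ℤ) - k).toNat = m - k := by omega
  rw [this]

private lemma schurZ_of_lt {m k : ℕ} (h : m < k) (x : ℕ → ℂ) :
    schurZ ((m : ℤ) - k) x = 0 := by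
  rw [schurZ, if_neg (by omega)]

/-- The tau function satisfies the Laplace (Cauchy–Binet)
expansion `σ = ∑_{ν_1<⋯<ν_N} |det Φ_{i,ν_j}|²`; in particular `σ` is real and
nonnegative everywhere. -/
theorem tau_laplace_expansion
    (N : ℕ) (hN : 0 < N) (n : Fin N → ℕ) (hpos : ∀ i, 0 < n i)
    (hdist : Function.Injective n)
    (a : Fin N → ℕ → ℂ) (ha : ∀ i j, (j = 0 ∨ n i < j) → a i j = 0)
    (s : ℕ → ℝ) (hs : IsSCoeffs s)
    (Nhat : ℕ) (hNhat : Nhat = 1 + Finset.univ.sup n)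
    (x y t : ℝ) :
    tau N n a s x y t
      = ∑ S ∈ ((Finset.univ : Finset (Fin Nhat)).powersetCard N).attach,
          (Complex.normSq (Matrix.det (Matrix.of fun i j : Fin N =>
            PhiMat N Nhat n a s x y t i
              ((S.1.orderIsoOfFin (Finset.mem_powersetCard.mp S.2).2 j : {v // v ∈ S.1}) : Fin Nhat))) : ℂ)
      ∧ (tau N n a s x y t).im = 0 ∧ 0 ≤ (tau N n a s x y t).re := by
  classical
  set Φ := PhiMat N Nhat n a s x y t with hPhi
  have hmin : ∀ i j : Fin N, min (n i) (n j) + 1 ≤ Nhat := by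
    intro i j
    rw [hNhat, Nat.add_comm 1]
    exact Nat.succ_le_succ (le_trans (min_le_left _ _) (Finset.le_sup (Finset.mem_univ i)))
  -- the per-column entry of Φ as a function of a natural index
  set E : Fin N → ℕ → ℂ := fun i ν =>
    ((2 : ℂ)⁻¹) ^ ν * schurZ ((n i : ℤ) - ν)
      (fun m => xplus x y t m + (ν : ℂ) * (s m : ℂ) + a i m) with hE
  have htau : tau N n a s x y t = (Φ * Φᴴ).det := by
    unfold tau
    congr 1
    ext i j
    simp only [Matrix.of_apply]
    rw [Matrix.mul_apply]
    have hsum : ∑ k : Fin Nhat, Φ i k * Φᴴ k j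
        = ∑ k ∈ Finset.range Nhat, E i k * (starRingEnd ℂ) (E j k) :=
      Fin.sum_univ_eq_sum_range (fun ν => E i ν * (starRingEnd ℂ) (E j ν)) Nhat
    rw [hsum]
    have hzero : ∀ k ∈ Finset.range Nhat, k ∉ Finset.range (min (n i) (n j) + 1) →
        E i k * (starRingEnd ℂ) (E j k) = 0 := by
      intro k _ hk
      rw [Finset.mem_range, Nat.lt_succ_iff, not_le] at hk
      rcases min_lt_iff.mp hk with h | h
      · rw [hE]
        simp only []
        rw [schurZ_of_lt h]
        ring
      · rw [hE]
        simp only []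
        rw [schurZ_of_lt h]
        simp
    rw [← Finset.sum_subset (Finset.range_subset_range.mpr (hmin i j)) hzero]
    refine Finset.sum_congr rfl fun ν hν => ?_
    rw [Finset.mem_range, Nat.lt_succ_iff] at hν
    have h1 : ν ≤ n i := le_trans hν (min_le_left _ _)
    have h2 : ν ≤ n j := le_trans hν (min_le_right _ _)
    rw [hE]
    simp only []
    rw [schurZ_of_le h1, schurZ_of_le h2, _root_.map_mul, map_pow, conj_schurS]
    have harg : (fun m => (starRingEnd ℂ) (xplus x y t m + (ν : ℂ) * (s m : ℂ) + a j m))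
        = fun m => (starRingEnd ℂ) (xplus x y t m) + (ν : ℂ) * (s m : ℂ)
            + (starRingEnd ℂ) (a j m) := by
      funext m
      rw [map_add, map_add, _root_.map_mul, Complex.conj_natCast, Complex.conj_ofReal]
    rw [harg]
    have hc2 : (starRingEnd ℂ) ((2 : ℂ)⁻¹) = (2 : ℂ)⁻¹ := by
      rw [map_inv₀, map_ofNat]
    rw [hc2]
    rw [show ((4 : ℂ)⁻¹) = (2 : ℂ)⁻¹ * (2 : ℂ)⁻¹ by norm_num, mul_pow]
    ring
  have heq : tau N n a s x y t
      = ∑ S ∈ ((Finset.univ : Finset (Fin Nhat)).powersetCard N).attach,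
          (Complex.normSq (Matrix.det (Matrix.of fun i j : Fin N =>
            PhiMat N Nhat n a s x y t i
              ((S.1.orderIsoOfFin (Finset.mem_powersetCard.mp S.2).2 j : {v // v ∈ S.1}) : Fin Nhat))) : ℂ) := by
    rw [htau, cauchyBinet Φ Φᴴ,
      ← Finset.sum_attach ((Finset.univ : Finset (Fin Nhat)).powersetCard N)]
    refine Finset.sum_congr rfl fun S _ => ?_
    have h : S.1.card = N := (Finset.mem_powersetCard.mp S.2).2
    rw [dif_pos h]
    set g : Fin N → Fin Nhat :=
      fun j => ((S.1.orderIsoOfFin h j : {v // v ∈ S.1}) : Fin Nhat) with hg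
    have hB : (Φᴴ).submatrix g id = (Φ.submatrix id g)ᴴ := by
      rw [Matrix.conjTranspose_submatrix]
    rw [hB, Matrix.det_conjTranspose]
    have hA : Φ.submatrix id g
        = Matrix.of fun i j : Fin N => PhiMat N Nhat n a s x y t i (g j) := rfl
    rw [hA]
    rw [show (star ((Matrix.of fun i j : Fin N => PhiMat N Nhat n a s x y t i (g j)).det))
        = (starRingEnd ℂ) ((Matrix.of fun i j : Fin N => PhiMat N Nhat n a s x y t i (g j)).det)
      from rfl]
    rw [Complex.mul_conj]
  refine ⟨heq, ?_, ?_⟩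
  · rw [heq]
    rw [← Complex.ofReal_sum]
    exact Complex.ofReal_im _
  · rw [heq]
    rw [← Complex.ofReal_sum, Complex.ofReal_re]
    exact Finset.sum_nonneg fun S _ => Complex.normSq_nonneg _
end

section
/- For every integer n ≥ 1 and every z ∈ ℂ, the determinant of the n × n matrix whose (i, j) entry is z^{2i−j}/(2i−j)! (with the convention that this entry is 0 when 2i − j < 0) equals z^{n(n+1)/2} / κ_n, where κ_n = ∏_{j=1}^{n} (2j−1)!!. -/
/-!
For `z ≠ 0`, pulling `z ^ x i` out of row `i` and `z⁻¹ ^ j` out of column `j` of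
`(z ^ (x i - j) / (x i - j)!)` reduces the determinant to its value at `z = 1`, times
`z ^ (∑ x i - ∑ j)`; for `x i = 2 i + 1` this power is `z ^ (n (n + 1) / 2)` (at `z = 0` the last
row vanishes). At `z = 1` the entry is `(x i).descFactorial j / (x i)!`, and
`descPochhammer j` is monic of degree `j`, so the determinant is the Vandermonde determinant of the
`x i` divided by `∏ (x i)!`. For `x i = 2 i + 1` the former is `∏ 2 ^ i i!` and the latter is
`κ_n ∏ 2 ^ i i!`, since `(2 i + 1)! = (2 i + 1)‼ (2 i)‼`.
-/

/-- `κ_n = ∏_{j=1}^{n} (2j−1)‼`. -/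
def kappa (n : ℕ) : ℕ := ∏ j ∈ Finset.range n, Nat.doubleFactorial (2 * j + 1)

open Finset Matrix Polynomial Nat

namespace Matrix

variable {R : Type*} [CommRing R] {n : ℕ}

theorem det_vandermonde_const_mul (a : R) (v : Fin n → R) :
    (vandermonde fun i ↦ a * v i).det = a ^ (∑ i : Fin n, (i : ℕ)) * (vandermonde v).det := by
  rw [← prod_pow_eq_pow_sum, ← det_mul_row]
  congr 1
  ext i j
  simp [mul_pow]

theorem det_vandermonde_id_eq_prod_factorial (n : ℕ) :
    (vandermonde fun i : Fin n ↦ ((i : ℕ) : R)).det = ∏ i ∈ range n, (i ! : R) := by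
  cases n with
  | zero => simp
  | succ m => simp [det_vandermonde_id_eq_superFactorial, ← prod_range_succ_factorial]

end Matrix

section ExpCoeffMatrix

variable {K : Type*} [Field K] {n : ℕ}

def expCoeffMatrix (x : Fin n → ℕ) (z : K) : Matrix (Fin n) (Fin n) K :=
  of fun i j ↦ if (j : ℕ) ≤ x i then z ^ (x i - j) / ((x i - j)! : K) else 0

theorem expCoeffMatrix_one [CharZero K] (x : Fin n → ℕ) :
    expCoeffMatrix x (1 : K) =
      of fun i (j : Fin n) ↦ ((x i)! : K)⁻¹ * (descPochhammer K j).eval (x i : K) := by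
  ext i j
  simp only [expCoeffMatrix, of_apply, one_pow, descPochhammer_eval_eq_descFactorial]
  split_ifs with h
  · have hd : ((x i).descFactorial j : K) ≠ 0 :=
      mod_cast descFactorial_eq_zero_iff_lt.not.mpr (not_lt.mpr h)
    rw [← factorial_mul_descFactorial h, cast_mul, mul_inv, mul_assoc, inv_mul_cancel₀ hd,
      mul_one, one_div]
  · simp [descFactorial_eq_zero_iff_lt.mpr (not_le.mp h)]

theorem det_expCoeffMatrix_one [CharZero K] (x : Fin n → ℕ) :
    (expCoeffMatrix x (1 : K)).det =
      (vandermonde fun i ↦ (x i : K)).det / ∏ i, ((x i)! : K) := by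
  rw [expCoeffMatrix_one, div_eq_inv_mul, ← prod_inv_distrib,
    det_eval_matrixOfPolynomials_eq_det_vandermonde _ (fun j : Fin n ↦ descPochhammer K j)
      (fun j ↦ descPochhammer_natDegree K j) (fun j ↦ monic_descPochhammer K j)]
  exact det_mul_column _ _

theorem pow_sum_mul_det_expCoeffMatrix (x : Fin n → ℕ) (z : K) :
    z ^ (∑ j : Fin n, (j : ℕ)) * (expCoeffMatrix x z).det =
      z ^ (∑ i, x i) * (expCoeffMatrix x 1).det := by
  rw [← prod_pow_eq_pow_sum, ← prod_pow_eq_pow_sum, ← det_mul_row, ← det_mul_column]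
  congr 1
  ext i j
  simp only [expCoeffMatrix, of_apply, one_pow]
  split_ifs with h
  · rw [mul_div_assoc', ← pow_add, Nat.add_sub_cancel' h, mul_one_div]
  · simp

theorem det_expCoeffMatrix_of_ne_zero {x : Fin n → ℕ} {N : ℕ}
    (hN : ∑ i, x i = ∑ j : Fin n, (j : ℕ) + N) {z : K} (hz : z ≠ 0) :
    (expCoeffMatrix x z).det = z ^ N * (expCoeffMatrix x 1).det := by
  have h := pow_sum_mul_det_expCoeffMatrix x z
  rw [hN, pow_add, mul_assoc] at h
  exact mul_left_cancel₀ (pow_ne_zero _ hz) h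

theorem det_expCoeffMatrix_zero {x : Fin n → ℕ} {i : Fin n} (hi : n ≤ x i) :
    (expCoeffMatrix x (0 : K)).det = 0 :=
  det_eq_zero_of_row_eq_zero i fun j ↦ by
    simp [expCoeffMatrix, zero_pow (Nat.sub_ne_zero_of_lt (j.2.trans_le hi))]

end ExpCoeffMatrix

theorem sum_fin_two_mul_add_one (n : ℕ) :
    ∑ i : Fin n, (2 * (i : ℕ) + 1) = ∑ j : Fin n, (j : ℕ) + n * (n + 1) / 2 := by
  have gauss : ∑ i ∈ range (n + 1), i = n * (n + 1) / 2 := by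
    rw [sum_range_id, add_tsub_cancel_right, mul_comm]
  rw [Fin.sum_univ_eq_sum_range (fun i ↦ 2 * i + 1), Fin.sum_univ_eq_sum_range (fun i ↦ i),
    ← gauss, sum_range_succ, sum_add_distrib, ← mul_sum, sum_const, card_range, smul_eq_mul]
  ring

theorem prod_factorial_two_mul_add_one (n : ℕ) :
    ∏ i ∈ range n, (2 * i + 1)! = kappa n * (2 ^ (∑ i ∈ range n, i) * ∏ i ∈ range n, i !) := by
  simp only [factorial_eq_mul_doubleFactorial, doubleFactorial_two_mul, prod_mul_distrib, kappa]
  rw [prod_pow_eq_pow_sum]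

/-- Rows and columns are 0-indexed, so the paper's entry `z^{2i−j}/(2i−j)!` reads
`z^{2i+1−j}/(2i+1−j)!` here. -/
theorem det_schur_triangle_general (n : ℕ) (z : ℂ) :
    Matrix.det (Matrix.of fun i j : Fin n =>
        if (j : ℕ) ≤ 2 * (i : ℕ) + 1 then
          z ^ (2 * (i : ℕ) + 1 - (j : ℕ)) / ((2 * (i : ℕ) + 1 - (j : ℕ)).factorial : ℂ)
        else 0)
      = z ^ (n * (n + 1) / 2) / (kappa n : ℂ) := by
  change (expCoeffMatrix (fun i : Fin n ↦ 2 * (i : ℕ) + 1) z).det = _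
  rcases eq_or_ne z 0 with rfl | hz
  · cases n with
    | zero => simp [kappa]
    | succ m =>
      rw [det_expCoeffMatrix_zero (i := Fin.last m) (by simp; omega),
        zero_pow (Nat.div_pos (by nlinarith) two_pos).ne', zero_div]
  · rw [det_expCoeffMatrix_of_ne_zero (sum_fin_two_mul_add_one n) hz, det_expCoeffMatrix_one]
    push_cast
    rw [det_vandermonde_add, det_vandermonde_const_mul, det_vandermonde_id_eq_prod_factorial,
      Fin.prod_univ_eq_prod_range (fun i ↦ ((2 * i + 1)! : ℂ)),
      ← cast_prod (f := fun i ↦ (2 * i + 1)!), prod_factorial_two_mul_add_one,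
      Fin.sum_univ_eq_sum_range (fun i ↦ i)]
    have : ∏ i ∈ range n, (i ! : ℂ) ≠ 0 :=
      prod_ne_zero_iff.mpr fun i _ ↦ mod_cast i.factorial_ne_zero
    push_cast
    field_simp

/-- The determinant of the `n × n` matrix with (1-indexed)
`(i,j)` entry `z^{2i−j}/(2i−j)!` (entry `0` when `2i−j < 0`) equals
`z^{n(n+1)/2}/κ_n`.  Here rows and columns are 0-indexed, so the entry is
`z^{2i+1−j}/(2i+1−j)!`. -/
theorem det_schur_triangle (n : ℕ) (hn : 1 ≤ n) (z : ℂ) :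
    Matrix.det (Matrix.of fun i j : Fin n =>
        if (j : ℕ) ≤ 2 * (i : ℕ) + 1 then
          z ^ (2 * (i : ℕ) + 1 - (j : ℕ)) / ((2 * (i : ℕ) + 1 - (j : ℕ)).factorial : ℂ)
        else 0)
      = z ^ (n * (n + 1) / 2) / (kappa n : ℂ) :=
  det_schur_triangle_general n z
end

section
/- Let k ≥ 0 be an integer, q > 1/3, c > 0, and let z : ℝ → ℂ be a function with |z(t)| ≥ c|t|^q for all sufficiently large |t|. For each t let v(t) = (z(t), 0, −16t, 0, 0, …) be the sequence with first entry z(t), third entry −16t, and all other entries 0. Then k! · S_k(v(t)) / z(t)^k → 1 as |t| → ∞. -/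
/-!
Scaling the entries `x_i ↦ a^i x_i` multiplies `S_k` by `a^k`, since every partition of `k`
has total weight `k`. With `a = z(t)` this gives
`k! S_k(v(t)) / z(t)^k = k! S_k(1, 0, u(t), 0, …)` where `u(t) = -16t / z(t)^3`.
The right-hand side is a polynomial in `u(t)`, and `|u(t)| ≤ 16 c⁻³ |t|^(1-3q) → 0` because
`q > 1/3`; at `u = 0` only the partition `1 + ⋯ + 1` contributes, with value `1 / k!`.
-/

open scoped BigOperators

open Filter Topology

theorem Nat.Partition.sum_mul_count_eq {k : ℕ} (p : k.Partition) :
    ∑ i ∈ p.parts.toFinset, i * p.parts.count i = k := by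
  conv_rhs => rw [← p.parts_sum, Finset.sum_multiset_count]
  simp only [smul_eq_mul, mul_comm]

theorem Nat.Partition.eq_ofComposition_ones {k : ℕ} {p : k.Partition}
    (hp : ∀ i ∈ p.parts, i = 1) : p = Nat.Partition.ofComposition k (Composition.ones k) := by
  have hones := Multiset.eq_replicate_card.2 hp
  have hcard := p.parts_sum
  rw [hones, Multiset.sum_replicate, smul_eq_mul, mul_one] at hcard
  ext1
  rw [hones, hcard]
  exact (Multiset.coe_replicate k 1).symm

theorem schurS_pow_mul (k : ℕ) (a : ℂ) (x : ℕ → ℂ) :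
    schurS k (fun i => a ^ i * x i) = a ^ k * schurS k x := by
  simp only [schurS, Finset.mul_sum]
  refine Finset.sum_congr rfl fun p _ => ?_
  simp only [mul_pow, ← pow_mul, mul_div_assoc, Finset.prod_mul_distrib,
    Finset.prod_pow_eq_pow_sum, p.sum_mul_count_eq]

theorem schurS_single_one (k : ℕ) (a : ℂ) :
    schurS k (fun n => if n = 1 then a else 0) = a ^ k / k.factorial := by
  rw [schurS, Fintype.sum_eq_single (Nat.Partition.ofComposition k (Composition.ones k))]
  · have hsub : (Nat.Partition.ofComposition k (Composition.ones k)).parts.toFinset ⊆ {1} := by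
      intro i hi
      simp_all [List.mem_replicate]
    rw [Finset.prod_subset hsub (by simp_all)]
    simp
  · intro p hp
    obtain ⟨i, hi, hi1⟩ : ∃ i ∈ p.parts, i ≠ 1 := by
      by_contra! h
      exact hp (Nat.Partition.eq_ofComposition_ones h)
    refine Finset.prod_eq_zero (Multiset.mem_toFinset.2 hi) ?_
    simp [hi1, Multiset.count_ne_zero.2 hi]

theorem continuous_schurS {X : Type*} [TopologicalSpace X] (k : ℕ) {x : X → ℕ → ℂ}
    (hx : ∀ i, Continuous fun u => x u i) : Continuous fun u => schurS k (x u) :=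
  continuous_finsetSum _ fun _ _ => continuous_finsetProd _ fun i _ =>
    ((hx i).pow _).div_const _

theorem tendsto_abs_cocompact_atTop : Tendsto (fun t : ℝ => |t|) (cocompact ℝ) atTop :=
  tendsto_norm_cocompact_atTop

theorem eventually_ne_zero_of_growth {z : ℝ → ℂ} {q c : ℝ} (hc : 0 < c)
    (hz : ∀ᶠ t in cocompact ℝ, c * |t| ^ q ≤ ‖z t‖) : ∀ᶠ t in cocompact ℝ, z t ≠ 0 := by
  filter_upwards [hz, tendsto_abs_cocompact_atTop.eventually_gt_atTop 0] with t hzt ht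
  exact norm_pos_iff.1 ((mul_pos hc (Real.rpow_pos_of_pos ht q)).trans_le hzt)

theorem tendsto_div_pow_of_growth {z : ℝ → ℂ} {q c : ℝ} {n : ℕ} (hqn : 1 < q * n) (hc : 0 < c)
    (hz : ∀ᶠ t in cocompact ℝ, c * |t| ^ q ≤ ‖z t‖) :
    Tendsto (fun t : ℝ => (t : ℂ) / z t ^ n) (cocompact ℝ) (𝓝 0) := by
  have hdecay : Tendsto (fun t : ℝ => (c ^ n)⁻¹ * |t| ^ (1 - q * n)) (cocompact ℝ) (𝓝 0) := by
    simpa using ((tendsto_rpow_neg_atTop (sub_pos.2 hqn)).comp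
      tendsto_abs_cocompact_atTop).const_mul (c ^ n)⁻¹
  refine squeeze_zero_norm' ?_ hdecay
  filter_upwards [hz, tendsto_abs_cocompact_atTop.eventually_gt_atTop 0] with t hzt ht
  have hpow : (c * |t| ^ q) ^ n = c ^ n * |t| ^ (q * n) := by
    rw [mul_pow, Real.rpow_mul ht.le, Real.rpow_natCast]
  calc ‖(t : ℂ) / z t ^ n‖ = |t| / ‖z t‖ ^ n := by simp
    _ ≤ |t| / (c * |t| ^ q) ^ n := by gcongr
    _ = (c ^ n)⁻¹ * |t| ^ (1 - q * n) := by
      rw [hpow, Real.rpow_sub ht, Real.rpow_one]; ring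

/-- If `|z(t)| ≥ c|t|^q` (with `q > 1/3`) for all large `|t|`,
and `v(t) = (z(t), 0, −16t, 0, 0, …)`, then `k! S_k(v(t))/z(t)^k → 1` as `|t| → ∞`. -/
theorem schurS_asymptotics (k : ℕ) (q c : ℝ) (hq : 1 / 3 < q) (hc : 0 < c)
    (z : ℝ → ℂ)
    (hz : ∃ T : ℝ, ∀ t : ℝ, T ≤ |t| → c * |t| ^ q ≤ ‖z t‖) :
    Filter.Tendsto
      (fun t : ℝ => (Nat.factorial k : ℂ)
          * schurS k (fun n => if n = 1 then z t else if n = 3 then (-16 * t : ℂ) else 0)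
          / z t ^ k)
      (Filter.cocompact ℝ) (nhds 1) := by
  obtain ⟨T, hT⟩ := hz
  have hgrowth : ∀ᶠ t in cocompact ℝ, c * |t| ^ q ≤ ‖z t‖ :=
    (tendsto_abs_cocompact_atTop.eventually_ge_atTop T).mono hT
  let y (u : ℂ) (n : ℕ) : ℂ := if n = 1 then 1 else if n = 3 then u else 0
  have hcont : Continuous fun u => (k.factorial : ℂ) * schurS k (y u) :=
    continuous_const.mul (continuous_schurS k fun n => by dsimp only [y]; split_ifs <;> fun_prop)
  have hy0 : (k.factorial : ℂ) * schurS k (y 0) = 1 := by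
    simp [y, schurS_single_one, Nat.factorial_ne_zero]
  have hu : Tendsto (fun t : ℝ => -16 * t / z t ^ 3) (cocompact ℝ) (𝓝 0) := by
    simpa only [mul_zero, mul_div_assoc] using
      (tendsto_div_pow_of_growth (n := 3) (by push_cast; linarith) hc hgrowth).const_mul (-16 : ℂ)
  refine (hy0 ▸ (hcont.tendsto 0).comp hu).congr' ?_
  filter_upwards [eventually_ne_zero_of_growth hc hgrowth] with t hzt
  have hscale : (fun n => if n = 1 then z t else if n = 3 then (-16 * t : ℂ) else 0) =
      fun n => z t ^ n * y (-16 * t / z t ^ 3) n := by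
    funext n
    dsimp only [y]
    split_ifs <;> simp_all [mul_div_cancel₀]
  simp only [Function.comp_apply, hscale, schurS_pow_mul]
  field_simp
end
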